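/- Let R be a commutative ring that is not an integral domain (there exist nonzero x, y with xy = 0), and let A = R × R with the exchange involution (x,y)* = (y,x). Then Γ'(A) is connected. -/

import Mathlib

/-- The nonzero zero-divisors of `R × R`. -/
def ZstarProd (R : Type*) [CommRing R] : Set (R × R) :=
  {a | a ≠ 0 ∧ ∃ b : R × R, b ≠ 0 ∧ (a * b = 0 ∨ b * a = 0)}

/-- The generalized zero-divisor graph Γ'(R × R), with the exchange involution
`(x, y)* = (y, x)`. -/
def gammaPProd (R : Type*) [CommRing R] : SimpleGraph (ZstarProd R) where
  Adj a b := a ≠ b ∧ ∃ n : ℕ, 0 < n ∧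
      ((a : R × R) ^ n * (b : R × R).swap = 0 ∨ (b : R × R) ^ n * (a : R × R).swap = 0)
  symm := by
    constructor
    rintro a b ⟨hne, n, hn, h⟩
    exact ⟨hne.symm, n, hn, h.symm⟩
  loopless := by constructor; rintro a ⟨hne, -⟩; exact hne rfl

/-!
Vertices with a vanishing coordinate lie on two "axes", and all vertices on one axis are
pairwise adjacent, since `(a, 0) * (c, 0).swap = 0`. Every vertex `p` is an axis vertex or
adjacent to one: if `p * b = 0` with `b ≠ 0`, then `p * (b.1, 0) = 0 = p * (0, b.2)`, so `p`
is adjacent to `(0, b.1)` or to `(b.2, 0)`. Finally, a pair `x * y = 0` of nonzero elements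
joins the two axes through the vertex `(y, y)`, which is adjacent to both `(x, 0)` and `(0, x)`.
-/

namespace ZstarProd

variable {R : Type*} [CommRing R] [Nontrivial R] {c : R}

theorem mk_zero_mem (hc : c ≠ 0) : ((c, 0) : R × R) ∈ ZstarProd R :=
  ⟨by simpa using hc, (0, 1), by simp, Or.inl (by simp)⟩

theorem zero_mk_mem (hc : c ≠ 0) : ((0, c) : R × R) ∈ ZstarProd R :=
  ⟨by simpa using hc, (1, 0), by simp, Or.inl (by simp)⟩

end ZstarProd

namespace gammaPProd

variable {R : Type*} [CommRing R]

theorem reachable_of_mul_swap_eq_zero {p q : ZstarProd R}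
    (h : (p : R × R) * (q : R × R).swap = 0) : (gammaPProd R).Reachable p q := by
  by_cases hpq : p = q
  · exact hpq ▸ .refl _
  · exact SimpleGraph.Adj.reachable ⟨hpq, 1, one_pos, Or.inl (by simpa using h)⟩

theorem reachable_of_snd_eq_zero {p q : ZstarProd R} (hp : (p : R × R).2 = 0)
    (hq : (q : R × R).2 = 0) : (gammaPProd R).Reachable p q :=
  reachable_of_mul_swap_eq_zero (Prod.ext (by simp [hq]) (by simp [hp]))

theorem reachable_of_fst_eq_zero {p q : ZstarProd R} (hp : (p : R × R).1 = 0)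
    (hq : (q : R × R).1 = 0) : (gammaPProd R).Reachable p q :=
  reachable_of_mul_swap_eq_zero (Prod.ext (by simp [hp]) (by simp [hq]))

theorem exists_reachable_fst_eq_zero_or_snd_eq_zero (p : ZstarProd R) :
    ∃ q : ZstarProd R, (gammaPProd R).Reachable p q ∧
      ((q : R × R).1 = 0 ∨ (q : R × R).2 = 0) := by
  obtain ⟨-, b, hb, hpb⟩ := p.2
  have hpb : (p : R × R) * b = 0 := hpb.elim id (mul_comm b _ ▸ ·)
  by_cases hb₁ : b.1 = 0
  · have hb₂ : b.2 ≠ 0 := fun hb₂ ↦ hb (Prod.ext hb₁ hb₂)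
    have : Nontrivial R := nontrivial_of_ne _ _ hb₂
    refine ⟨⟨(b.2, 0), ZstarProd.mk_zero_mem hb₂⟩,
      reachable_of_mul_swap_eq_zero ?_, .inr rfl⟩
    exact Prod.ext (by simp) (by simpa using congrArg Prod.snd hpb)
  · have : Nontrivial R := nontrivial_of_ne _ _ hb₁
    refine ⟨⟨(0, b.1), ZstarProd.zero_mk_mem hb₁⟩,
      reachable_of_mul_swap_eq_zero ?_, .inl rfl⟩
    exact Prod.ext (by simpa using congrArg Prod.fst hpb) (by simp)

section Bridge

variable {x y : R} (hx : x ≠ 0) (hy : y ≠ 0) (hxy : x * y = 0)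
include hx hy hxy

theorem reachable_of_fst_eq_zero_of_snd_eq_zero {p q : ZstarProd R} (hp : (p : R × R).1 = 0)
    (hq : (q : R × R).2 = 0) : (gammaPProd R).Reachable p q := by
  have : Nontrivial R := nontrivial_of_ne _ _ hx
  let u : ZstarProd R :=
    ⟨(y, y), by simpa using hy, (x, x), by simpa using hx, Or.inl (by simp [mul_comm y, hxy])⟩
  let v : ZstarProd R := ⟨(x, 0), ZstarProd.mk_zero_mem hx⟩
  let w : ZstarProd R := ⟨(0, x), ZstarProd.zero_mk_mem hx⟩
  have hwu : (gammaPProd R).Reachable w u :=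
    reachable_of_mul_swap_eq_zero (Prod.ext (by simp [w]) (by simp [w, u, hxy]))
  have hvu : (gammaPProd R).Reachable v u :=
    reachable_of_mul_swap_eq_zero (Prod.ext (by simp [v, u, hxy]) (by simp [v]))
  exact (reachable_of_fst_eq_zero hp rfl).trans <|
    hwu.trans <| hvu.symm.trans (reachable_of_snd_eq_zero rfl hq)

theorem reachable_of_axes {p q : ZstarProd R} (hp : (p : R × R).1 = 0 ∨ (p : R × R).2 = 0)
    (hq : (q : R × R).1 = 0 ∨ (q : R × R).2 = 0) : (gammaPProd R).Reachable p q := by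
  rcases hp with hp | hp <;> rcases hq with hq | hq
  · exact reachable_of_fst_eq_zero hp hq
  · exact reachable_of_fst_eq_zero_of_snd_eq_zero hx hy hxy hp hq
  · exact (reachable_of_fst_eq_zero_of_snd_eq_zero hx hy hxy hq hp).symm
  · exact reachable_of_snd_eq_zero hp hq

end Bridge

end gammaPProd

/-- If `R` is a commutative ring that is not an integral domain, then Γ'(R × R)
(with exchange involution) is connected. -/
theorem stmt_19 {R : Type*} [CommRing R]
    (h : ∃ x y : R, x ≠ 0 ∧ y ≠ 0 ∧ x * y = 0) :
    (gammaPProd R).Connected := by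
  obtain ⟨x, y, hx, hy, hxy⟩ := h
  have : Nontrivial R := nontrivial_of_ne _ _ hx
  have : Nonempty (ZstarProd R) := ⟨⟨(x, 0), ZstarProd.mk_zero_mem hx⟩⟩
  refine ⟨fun p q ↦ ?_⟩
  obtain ⟨p', hpp', hp'⟩ := gammaPProd.exists_reachable_fst_eq_zero_or_snd_eq_zero p
  obtain ⟨q', hqq', hq'⟩ := gammaPProd.exists_reachable_fst_eq_zero_or_snd_eq_zero q
  exact hpp'.trans ((gammaPProd.reachable_of_axes hx hy hxy hp' hq').trans hqq'.symm)
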